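/- arXiv:1903.00627 — 2 statements merged into one kernel-verified Lean document; each statement's English description precedes it below -/
import Mathlib

section
/- Let α > 0, t₀ ∈ ℝ, and let u : [t₀, ∞) → ℝ be a nonnegative nondecreasing continuous function, v : [t₀, ∞) → ℝ nonnegative nondecreasing continuous and bounded, and y : [t₀, ∞) → ℝ nonnegative continuous. If y(t) ≤ u(t) + v(t) ∫_{t₀}^t ((t-τ)^{α-1}/Γ(α)) y(τ) dτ for all t ≥ t₀, then y(t) ≤ u(t) E_α(v(t) Γ(α) · (t-t₀)^α / Γ(α)) · 1, i.e., y(t) ≤ u(t) ∑_{k=0}^∞ (v(t))^k (t-t₀)^{kα}/Γ(kα+1) for all t ≥ t₀. -/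
open Set Real intervalIntegral Filter


lemma gamma_shift_ge {x a : ℝ} (hx : 2 ≤ x) (ha : 0 < a) :
    Real.Gamma x * (x - 1) ^ a ≤ Real.Gamma (x + a) := by
  have hx1 : (0:ℝ) < x - 1 := by linarith
  have hxa : (0:ℝ) < x + a := by linarith
  have hs := Real.convexOn_log_Gamma.slope_mono_adjacent
    (x := x - 1) (y := x) (z := x + a)
    (mem_Ioi.2 hx1) (mem_Ioi.2 hxa) (by linarith) (by linarith)
  have hΓx : Real.Gamma x = (x - 1) * Real.Gamma (x - 1) := by
    have := Real.Gamma_add_one (s := x - 1) hx1.ne'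
    simpa using this
  simp only [Function.comp_apply] at hs
  have hlog : Real.log (Real.Gamma x) - Real.log (Real.Gamma (x - 1)) = Real.log (x - 1) := by
    rw [hΓx, Real.log_mul hx1.ne' (Real.Gamma_pos_of_pos hx1).ne']; ring
  have hden : x - (x - 1) = 1 := by ring
  rw [hden, div_one, hlog] at hs
  have h1 : Real.log (x - 1) * a + Real.log (Real.Gamma x) ≤ Real.log (Real.Gamma (x + a)) := by
    have h2 : Real.log (x - 1) * a ≤ Real.log (Real.Gamma (x + a)) - Real.log (Real.Gamma x) := by
      have h3 := mul_le_mul_of_nonneg_right hs ha.le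
      have h4 : x + a - x = a := by ring
      rw [h4, div_mul_cancel₀ _ ha.ne'] at h3
      exact h3
    linarith
  calc Real.Gamma x * (x - 1) ^ a
      = Real.exp (Real.log (x - 1) * a + Real.log (Real.Gamma x)) := by
        rw [Real.exp_add, Real.rpow_def_of_pos hx1,
          Real.exp_log (Real.Gamma_pos_of_pos (by linarith : (0:ℝ) < x))]
        ring
    _ ≤ Real.exp (Real.log (Real.Gamma (x + a))) := Real.exp_le_exp.2 h1
    _ = Real.Gamma (x + a) := Real.exp_log (Real.Gamma_pos_of_pos hxa)

lemma ml_summable {α : ℝ} (hα : 0 < α) {c : ℝ} (hc : 0 ≤ c) :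
    Summable (fun n : ℕ => c ^ n / Real.Gamma ((n : ℝ) * α + 1)) := by
  apply summable_of_ratio_norm_eventually_le (r := 1/2) (by norm_num)
  have h1 : ∀ᶠ n : ℕ in atTop, (1:ℝ) ≤ (n : ℝ) * α := by
    have : Tendsto (fun n : ℕ => (n : ℝ) * α) atTop atTop :=
      Tendsto.atTop_mul_const hα tendsto_natCast_atTop_atTop
    exact this.eventually_ge_atTop 1
  have h2 : ∀ᶠ n : ℕ in atTop, 2 * c ≤ ((n : ℝ) * α) ^ α := by
    have t1 : Tendsto (fun n : ℕ => (n : ℝ) * α) atTop atTop :=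
      Tendsto.atTop_mul_const hα tendsto_natCast_atTop_atTop
    exact ((tendsto_rpow_atTop hα).comp t1).eventually_ge_atTop (2*c)
  filter_upwards [h1, h2] with n hn1 hn2
  have hΓpos : ∀ m : ℕ, 0 < Real.Gamma ((m : ℝ) * α + 1) :=
    fun m => Real.Gamma_pos_of_pos (by positivity)
  have hterm : ∀ m : ℕ, (0:ℝ) ≤ c ^ m / Real.Gamma ((m : ℝ) * α + 1) :=
    fun m => div_nonneg (pow_nonneg hc _) (hΓpos m).le
  rw [Real.norm_eq_abs, Real.norm_eq_abs, abs_of_nonneg (hterm _), abs_of_nonneg (hterm _)]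
  -- key : Γ((n+1)α+1) ≥ Γ(nα+1) * (nα)^α ≥ Γ(nα+1) * 2c
  have hkey : Real.Gamma ((n : ℝ) * α + 1) * (2 * c) ≤ Real.Gamma (((n : ℕ) + 1 : ℝ) * α + 1) := by
    have hx : (2:ℝ) ≤ (n : ℝ) * α + 1 := by linarith
    have := gamma_shift_ge hx hα
    have he : (n : ℝ) * α + 1 - 1 = (n : ℝ) * α := by ring
    rw [he] at this
    have he2 : (n : ℝ) * α + 1 + α = ((n : ℝ) + 1) * α + 1 := by ring
    rw [he2] at this
    calc Real.Gamma ((n : ℝ) * α + 1) * (2 * c)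
        ≤ Real.Gamma ((n : ℝ) * α + 1) * ((n : ℝ) * α) ^ α :=
          mul_le_mul_of_nonneg_left hn2 (hΓpos n).le
      _ ≤ _ := this
  have hcast : ((n + 1 : ℕ) : ℝ) = (n : ℝ) + 1 := by push_cast; ring
  rw [hcast] at *
  rcases eq_or_lt_of_le hc with hc0 | hc0
  · rw [← hc0]
    simp [zero_pow (Nat.succ_ne_zero n)]
    positivity
  · have hD : 0 < Real.Gamma (((n : ℝ) + 1) * α + 1) := Real.Gamma_pos_of_pos (by positivity)
    rw [div_le_iff₀ hD]
    have : c ^ (n+1) = c ^ n * c := by ring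
    rw [this]
    calc c ^ n * c = (c ^ n / Real.Gamma ((n : ℝ) * α + 1)) *
          (Real.Gamma ((n : ℝ) * α + 1) * c) := by
            field_simp
      _ ≤ (c ^ n / Real.Gamma ((n : ℝ) * α + 1)) * (Real.Gamma (((n : ℝ) + 1) * α + 1) / 2) := by
            apply mul_le_mul_of_nonneg_left _ (hterm n)
            linarith [hkey]
      _ = 1 / 2 * (c ^ n / Real.Gamma ((n : ℝ) * α + 1)) * Real.Gamma (((n : ℝ) + 1) * α + 1) := by
            ring

lemma real_beta {a b : ℝ} (ha : 0 < a) (hb : 0 < b) :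
    ∫ x in (0:ℝ)..1, x ^ (a - 1) * (1 - x) ^ (b - 1) =
      Real.Gamma a * Real.Gamma b / Real.Gamma (a + b) := by
  have key := Complex.Gamma_mul_Gamma_eq_betaIntegral (s := (a:ℂ)) (t := (b:ℂ))
    (by simpa using ha) (by simpa using hb)
  have hbeta : Complex.betaIntegral (a:ℂ) (b:ℂ) =
      ((∫ x in (0:ℝ)..1, x ^ (a - 1) * (1 - x) ^ (b - 1) : ℝ) : ℂ) := by
    rw [Complex.betaIntegral, ← intervalIntegral.integral_ofReal]
    apply intervalIntegral.integral_congr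
    intro x hx
    rw [uIcc_of_le (zero_le_one : (0:ℝ) ≤ 1)] at hx
    have hx0 : (0:ℝ) ≤ x := hx.1
    have hx1 : (0:ℝ) ≤ 1 - x := by linarith [hx.2]
    show (x:ℂ) ^ ((a:ℂ) - 1) * (1 - (x:ℂ)) ^ ((b:ℂ) - 1)
      = ((x ^ (a - 1) * (1 - x) ^ (b - 1) : ℝ) : ℂ)
    rw [Complex.ofReal_mul, Complex.ofReal_cpow hx0, Complex.ofReal_cpow hx1]
    push_cast
    ring_nf
  rw [hbeta, ← Complex.ofReal_add, Complex.Gamma_ofReal, Complex.Gamma_ofReal,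
    Complex.Gamma_ofReal, ← Complex.ofReal_mul, ← Complex.ofReal_mul] at key
  have := Complex.ofReal_injective key
  have hab : Real.Gamma (a + b) ≠ 0 := (Real.Gamma_pos_of_pos (by linarith)).ne'
  field_simp
  linarith [this]

lemma kernel_integrable {α : ℝ} (hα : 0 < α) (t₀ s : ℝ) :
    IntervalIntegrable (fun τ => (s - τ) ^ (α - 1)) MeasureTheory.volume t₀ s := by
  have h := intervalIntegral.intervalIntegrable_rpow' (a := 0) (b := s - t₀)
    (r := α - 1) (by linarith)
  have h2 := h.comp_sub_left s
  simp only [sub_sub_cancel, sub_zero] at h2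
  exact h2.symm

lemma kernel_integral {α β t₀ s : ℝ} (hα : 0 < α) (hβ : 0 ≤ β) (hs : t₀ ≤ s) :
    ∫ τ in t₀..s, (s - τ) ^ (α - 1) * (τ - t₀) ^ β =
      Real.Gamma (β + 1) * Real.Gamma α / Real.Gamma (α + β + 1) * (s - t₀) ^ (α + β) := by
  rcases eq_or_lt_of_le hs with rfl | hlt
  · simp [Real.zero_rpow (by positivity : α + β ≠ 0)]
  set c := s - t₀ with hc
  have hc0 : 0 < c := by simp [hc]; linarith
  have step1 : (∫ τ in t₀..s, (s - τ) ^ (α - 1) * (τ - t₀) ^ β)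
      = ∫ x in (0:ℝ)..c, (c - x) ^ (α - 1) * x ^ β := by
    have := intervalIntegral.integral_comp_add_right (a := 0) (b := c)
      (f := fun τ => (s - τ) ^ (α - 1) * (τ - t₀) ^ β) t₀
    rw [zero_add] at this
    have hcs : c + t₀ = s := by simp [hc]
    rw [hcs] at this
    rw [← this]
    apply intervalIntegral.integral_congr
    intro x _
    show (s - (x + t₀)) ^ (α - 1) * (x + t₀ - t₀) ^ β = (c - x) ^ (α - 1) * x ^ β
    have e1 : s - (x + t₀) = c - x := by rw [hc]; ring
    have e2 : x + t₀ - t₀ = x := by ring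
    rw [e1, e2]
  rw [step1]
  have step2 : (∫ x in (0:ℝ)..c, (c - x) ^ (α - 1) * x ^ β)
      = c • ∫ x in (0:ℝ)..1, (c - c * x) ^ (α - 1) * (c * x) ^ β := by
    have := intervalIntegral.smul_integral_comp_mul_left (a := 0) (b := 1)
      (f := fun x => (c - x) ^ (α - 1) * x ^ β) c
    rw [mul_zero, mul_one] at this
    rw [← this]
  rw [step2]
  have step3 : (∫ x in (0:ℝ)..1, (c - c * x) ^ (α - 1) * (c * x) ^ β)
      = c ^ (α - 1) * c ^ β * ∫ x in (0:ℝ)..1, x ^ (β + 1 - 1) * (1 - x) ^ (α - 1) := by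
    rw [← intervalIntegral.integral_const_mul]
    apply intervalIntegral.integral_congr
    intro x hx
    rw [uIcc_of_le (zero_le_one : (0:ℝ) ≤ 1)] at hx
    show (c - c * x) ^ (α - 1) * (c * x) ^ β
      = c ^ (α - 1) * c ^ β * (x ^ (β + 1 - 1) * (1 - x) ^ (α - 1))
    have h1 : c - c * x = c * (1 - x) := by ring
    rw [h1, Real.mul_rpow hc0.le (by linarith [hx.2]), Real.mul_rpow hc0.le hx.1]
    have h2 : β + 1 - 1 = β := by ring
    rw [h2]
    ring
  rw [step3, real_beta (by linarith) hα]
  have h1 : β + 1 + α = α + β + 1 := by ring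
  rw [h1]
  rw [smul_eq_mul]
  have hpow : c * (c ^ (α - 1) * c ^ β) = c ^ (α + β) := by
    rw [show α + β = 1 + (α - 1) + β by ring, Real.rpow_add hc0, Real.rpow_add hc0,
      Real.rpow_one]
    ring
  calc c * (c ^ (α - 1) * c ^ β * (Real.Gamma (β + 1) * Real.Gamma α / Real.Gamma (α + β + 1)))
      = c * (c ^ (α - 1) * c ^ β) * (Real.Gamma (β + 1) * Real.Gamma α / Real.Gamma (α + β + 1)) := by
        ring
    _ = _ := by rw [hpow]; ring


theorem stmt_11 (α t₀ : ℝ) (u v y : ℝ → ℝ)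
    (hα : 0 < α)
    (hu0 : ∀ t ∈ Ici t₀, 0 ≤ u t) (humono : MonotoneOn u (Ici t₀))
    (hucont : ContinuousOn u (Ici t₀))
    (hv0 : ∀ t ∈ Ici t₀, 0 ≤ v t) (hvmono : MonotoneOn v (Ici t₀))
    (hvcont : ContinuousOn v (Ici t₀))
    (hvbdd : ∃ B, ∀ t ∈ Ici t₀, v t ≤ B)
    (hy0 : ∀ t ∈ Ici t₀, 0 ≤ y t) (hycont : ContinuousOn y (Ici t₀))
    (h : ∀ t ∈ Ici t₀,
      y t ≤ u t + v t * ∫ τ in t₀..t, (t - τ) ^ (α - 1) / Real.Gamma α * y τ) :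
    ∀ t ∈ Ici t₀,
      y t ≤ u t * ∑' k : ℕ, (v t) ^ k * (t - t₀) ^ ((k : ℝ) * α) /
        Real.Gamma ((k : ℝ) * α + 1) := by
  intro t ht
  have ht' : t₀ ≤ t := ht
  rcases eq_or_lt_of_le ht' with rfl | hlt
  · -- t = t₀
    have h0 := h t₀ (le_refl t₀)
    rw [intervalIntegral.integral_same, mul_zero, add_zero] at h0
    have htsum : (∑' k : ℕ, (v t₀) ^ k * (t₀ - t₀) ^ ((k : ℝ) * α) /
        Real.Gamma ((k : ℝ) * α + 1)) = 1 := by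
      rw [sub_self]
      rw [tsum_eq_single 0 (fun k hk => by
        rw [Real.zero_rpow (by
          have : (0:ℝ) < (k : ℝ) := by exact_mod_cast Nat.pos_of_ne_zero hk
          positivity), mul_zero, zero_div])]
      norm_num [Real.Gamma_one]
    rw [htsum, mul_one]
    exact h0
  · -- t₀ < t
    obtain ⟨M, hM⟩ := (isCompact_Icc (a := t₀) (b := t)).exists_bound_of_continuousOn
      (hycont.mono Icc_subset_Ici_self)
    have hyM : ∀ s ∈ Icc t₀ t, y s ≤ M := fun s hs =>
      (le_abs_self _).trans (by simpa [Real.norm_eq_abs] using hM s hs)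
    have hM0 : 0 ≤ M := le_trans (by
      have := hy0 t₀ (le_refl t₀); linarith) (hyM t₀ (left_mem_Icc.2 ht'))
    have hU0 : 0 ≤ u t := hu0 t ht
    have hV0 : 0 ≤ v t := hv0 t ht
    have hΓα : 0 < Real.Gamma α := Real.Gamma_pos_of_pos hα
    have hΓ : ∀ k : ℕ, 0 < Real.Gamma ((k : ℝ) * α + 1) :=
      fun k => Real.Gamma_pos_of_pos (by positivity)
    have hgk : ∀ k : ℕ, Continuous (fun τ => ((τ - t₀) ^ α) ^ k) := by
      intro k
      have : Continuous (fun τ : ℝ => (τ - t₀) ^ α) := by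
        apply Continuous.rpow_const (by continuity)
        intro x; exact Or.inr hα.le
      exact this.pow k
    have hconv : ∀ x : ℝ, 0 ≤ x → ∀ k : ℕ, (x ^ α) ^ k = x ^ ((k : ℝ) * α) := by
      intro x hx k
      rw [mul_comm, Real.rpow_mul hx, Real.rpow_natCast]
    set U := u t with hUdef
    set V := v t with hVdef
    have key : ∀ n : ℕ, ∀ s ∈ Icc t₀ t,
        y s ≤ U * (∑ k ∈ Finset.range n,
            V ^ k * ((s - t₀) ^ α) ^ k / Real.Gamma ((k : ℝ) * α + 1))
          + M * (V ^ n * ((s - t₀) ^ α) ^ n / Real.Gamma ((n : ℝ) * α + 1)) := by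
      intro n
      induction n with
      | zero =>
        intro s hs
        simpa [Real.Gamma_one] using hyM s hs
      | succ n ih =>
        intro s hs
        have hs0 : t₀ ≤ s := hs.1
        have hsIcc : Icc t₀ s ⊆ Icc t₀ t := Icc_subset_Icc le_rfl hs.2
        have huIcc : uIcc t₀ s = Icc t₀ s := uIcc_of_le hs0
        -- J values
        have J : ∀ k : ℕ, (∫ τ in t₀..s, (s - τ) ^ (α - 1) * ((τ - t₀) ^ α) ^ k)
            = Real.Gamma ((k : ℝ) * α + 1) * Real.Gamma α /
                Real.Gamma (((k : ℝ) + 1) * α + 1) * ((s - t₀) ^ α) ^ (k + 1) := by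
          intro k
          have hcongr : ∀ τ ∈ uIcc t₀ s,
              (s - τ) ^ (α - 1) * ((τ - t₀) ^ α) ^ k
                = (s - τ) ^ (α - 1) * (τ - t₀) ^ ((k : ℝ) * α) := by
            intro τ hτ
            rw [huIcc] at hτ
            rw [hconv _ (by linarith [hτ.1]) k]
          rw [intervalIntegral.integral_congr hcongr,
            kernel_integral (β := (k:ℝ)*α) hα (by positivity) hs0]
          rw [hconv _ (by linarith : (0:ℝ) ≤ s - t₀) (k+1)]
          have e1 : α + (k : ℝ) * α = ((k : ℝ) + 1) * α := by ring
          have e2 : (((k:ℕ) + 1 : ℕ) : ℝ) * α = ((k : ℝ) + 1) * α := by push_cast; ring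
          rw [e1, e2]
        -- integrability
        have hKint := kernel_integrable hα t₀ s
        have hKgint : ∀ k : ℕ, IntervalIntegrable
            (fun τ => (s - τ) ^ (α - 1) * ((τ - t₀) ^ α) ^ k)
            MeasureTheory.volume t₀ s :=
          fun k => hKint.mul_continuousOn (hgk k).continuousOn
        have hKyint : IntervalIntegrable
            (fun τ => (s - τ) ^ (α - 1) / Real.Gamma α * y τ)
            MeasureTheory.volume t₀ s := by
          apply (hKint.div_const _).mul_continuousOn
          rw [huIcc]
          exact hycont.mono (Icc_subset_Ici_self)
        -- nonneg of integral
        have hKnonneg : ∀ τ ∈ Icc t₀ s, 0 ≤ (s - τ) ^ (α - 1) / Real.Gamma α :=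
          fun τ hτ => div_nonneg (Real.rpow_nonneg (by linarith [hτ.2]) _) hΓα.le
        have hInonneg : 0 ≤ ∫ τ in t₀..s, (s - τ) ^ (α - 1) / Real.Gamma α * y τ :=
          intervalIntegral.integral_nonneg hs0
            (fun τ hτ => mul_nonneg (hKnonneg τ hτ) (hy0 τ hτ.1))
        -- start the estimate
        have hyb := h s hs0
        have hus : u s ≤ U := humono hs0 ht hs.2
        have hvs : v s * (∫ τ in t₀..s, (s - τ) ^ (α - 1) / Real.Gamma α * y τ)
            ≤ V * (∫ τ in t₀..s, (s - τ) ^ (α - 1) / Real.Gamma α * y τ) :=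
          mul_le_mul_of_nonneg_right (hvmono hs0 ht hs.2) hInonneg
        -- bound integrand by f
        set F : ℕ → ℝ → ℝ := fun k τ =>
          U * V ^ k / (Real.Gamma ((k : ℝ) * α + 1) * Real.Gamma α) *
            ((s - τ) ^ (α - 1) * ((τ - t₀) ^ α) ^ k) with hFdef
        set G : ℝ → ℝ := fun τ =>
          M * V ^ n / (Real.Gamma ((n : ℝ) * α + 1) * Real.Gamma α) *
            ((s - τ) ^ (α - 1) * ((τ - t₀) ^ α) ^ n) with hGdef
        have hFint : ∀ k ∈ Finset.range n, IntervalIntegrable (F k)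
            MeasureTheory.volume t₀ s := fun k _ => (hKgint k).const_mul _
        have hGint : IntervalIntegrable G MeasureTheory.volume t₀ s :=
          (hKgint n).const_mul _
        have hFsum : IntervalIntegrable (fun τ => ∑ k ∈ Finset.range n, F k τ)
            MeasureTheory.volume t₀ s := by
          have h' := IntervalIntegrable.sum (Finset.range n) hFint
          rw [show (fun τ => ∑ k ∈ Finset.range n, F k τ) = ∑ k ∈ Finset.range n, F k by
            funext τ; simp [Finset.sum_apply]]
          exact h'
        have hSumint : IntervalIntegrable (fun τ => (∑ k ∈ Finset.range n, F k τ) + G τ)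
            MeasureTheory.volume t₀ s := hFsum.add hGint
        have hmono2 : (∫ τ in t₀..s, (s - τ) ^ (α - 1) / Real.Gamma α * y τ)
            ≤ ∫ τ in t₀..s, ((∑ k ∈ Finset.range n, F k τ) + G τ) := by
          apply intervalIntegral.integral_mono_on hs0 hKyint hSumint
          intro τ hτ
          have hτt : τ ∈ Icc t₀ t := hsIcc hτ
          have hihτ := ih τ hτt
          have hKpos := hKnonneg τ hτ
          calc (s - τ) ^ (α - 1) / Real.Gamma α * y τ
              ≤ (s - τ) ^ (α - 1) / Real.Gamma α *
                (U * (∑ k ∈ Finset.range n,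
                  V ^ k * ((τ - t₀) ^ α) ^ k / Real.Gamma ((k : ℝ) * α + 1))
                + M * (V ^ n * ((τ - t₀) ^ α) ^ n / Real.Gamma ((n : ℝ) * α + 1))) :=
                mul_le_mul_of_nonneg_left hihτ hKpos
            _ = (∑ k ∈ Finset.range n, F k τ) + G τ := by
                rw [Finset.mul_sum, mul_add, Finset.mul_sum]
                congr 1
                · apply Finset.sum_congr rfl
                  intro k _
                  simp only [hFdef]
                  field_simp
                · simp only [hGdef]
                  field_simp
        have hint_eval : (∫ τ in t₀..s, ((∑ k ∈ Finset.range n, F k τ) + G τ))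
            = (∑ k ∈ Finset.range n,
                U * V ^ k / (Real.Gamma ((k : ℝ) * α + 1) * Real.Gamma α) *
                  (Real.Gamma ((k : ℝ) * α + 1) * Real.Gamma α /
                    Real.Gamma (((k : ℝ) + 1) * α + 1) * ((s - t₀) ^ α) ^ (k + 1)))
              + M * V ^ n / (Real.Gamma ((n : ℝ) * α + 1) * Real.Gamma α) *
                  (Real.Gamma ((n : ℝ) * α + 1) * Real.Gamma α /
                    Real.Gamma (((n : ℝ) + 1) * α + 1) * ((s - t₀) ^ α) ^ (n + 1)) := by
          rw [intervalIntegral.integral_add hFsum hGint,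
            intervalIntegral.integral_finset_sum hFint]
          congr 1
          · apply Finset.sum_congr rfl
            intro k _
            simp only [hFdef]
            rw [intervalIntegral.integral_const_mul, J k]
          · simp only [hGdef]
            rw [intervalIntegral.integral_const_mul, J n]
        -- put it together
        have hstep : y s ≤ U + V *
            ((∑ k ∈ Finset.range n,
                U * V ^ k * ((s - t₀) ^ α) ^ (k + 1) / Real.Gamma (((k : ℝ) + 1) * α + 1))
              + M * V ^ n * ((s - t₀) ^ α) ^ (n + 1) /
                  Real.Gamma (((n : ℝ) + 1) * α + 1)) := by
          have hsimp : ∀ k : ℕ,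
              U * V ^ k / (Real.Gamma ((k : ℝ) * α + 1) * Real.Gamma α) *
                (Real.Gamma ((k : ℝ) * α + 1) * Real.Gamma α /
                  Real.Gamma (((k : ℝ) + 1) * α + 1) * ((s - t₀) ^ α) ^ (k + 1))
              = U * V ^ k * ((s - t₀) ^ α) ^ (k + 1) /
                  Real.Gamma (((k : ℝ) + 1) * α + 1) := by
            intro k
            have h1 := (hΓ k).ne'
            have h2 := hΓα.ne'
            field_simp
          have hsimpM :
              M * V ^ n / (Real.Gamma ((n : ℝ) * α + 1) * Real.Gamma α) *
                (Real.Gamma ((n : ℝ) * α + 1) * Real.Gamma α /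
                  Real.Gamma (((n : ℝ) + 1) * α + 1) * ((s - t₀) ^ α) ^ (n + 1))
              = M * V ^ n * ((s - t₀) ^ α) ^ (n + 1) /
                  Real.Gamma (((n : ℝ) + 1) * α + 1) := by
            have h1 := (hΓ n).ne'
            have h2 := hΓα.ne'
            field_simp
          calc y s ≤ u s + v s * ∫ τ in t₀..s, (s - τ) ^ (α - 1) / Real.Gamma α * y τ := hyb
            _ ≤ U + V * ∫ τ in t₀..s, (s - τ) ^ (α - 1) / Real.Gamma α * y τ := by
                linarith [hus, hvs]
            _ ≤ U + V * ∫ τ in t₀..s, ((∑ k ∈ Finset.range n, F k τ) + G τ) := by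
                have := mul_le_mul_of_nonneg_left hmono2 hV0
                linarith [this]
            _ = _ := by
                rw [hint_eval, Finset.sum_congr rfl (fun k _ => hsimp k), hsimpM]
        -- rearrange to the (n+1) form
        refine hstep.trans (le_of_eq ?_)
        rw [Finset.sum_range_succ']
        simp only [pow_zero, Nat.cast_zero, zero_mul, zero_add, Real.Gamma_one, one_mul,
          div_one]
        have h1 : V * (∑ k ∈ Finset.range n,
            U * V ^ k * ((s - t₀) ^ α) ^ (k + 1) / Real.Gamma (((k : ℝ) + 1) * α + 1))
            = U * ∑ k ∈ Finset.range n,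
              V ^ (k + 1) * ((s - t₀) ^ α) ^ (k + 1) /
                Real.Gamma (((k + 1 : ℕ) : ℝ) * α + 1) := by
          rw [Finset.mul_sum, Finset.mul_sum]
          apply Finset.sum_congr rfl
          intro k _
          push_cast
          ring
        have h2 : V * (M * V ^ n * ((s - t₀) ^ α) ^ (n + 1) /
              Real.Gamma (((n : ℝ) + 1) * α + 1))
            = M * (V ^ (n + 1) * ((s - t₀) ^ α) ^ (n + 1) /
              Real.Gamma (((n + 1 : ℕ) : ℝ) * α + 1)) := by
          push_cast
          ring
        rw [mul_add, h1, h2]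
        ring
    -- pass to the limit at s = t
    set w := (t - t₀) ^ α with hwdef
    have hw0 : 0 ≤ w := Real.rpow_nonneg (by linarith) _
    have hsum : Summable (fun k : ℕ => V ^ k * w ^ k / Real.Gamma ((k : ℝ) * α + 1)) := by
      have := ml_summable hα (mul_nonneg hV0 hw0)
      apply this.congr
      intro k
      rw [mul_pow]
    have hpartial : Filter.Tendsto
        (fun n : ℕ => U * (∑ k ∈ Finset.range n,
            V ^ k * w ^ k / Real.Gamma ((k : ℝ) * α + 1))
          + M * (V ^ n * w ^ n / Real.Gamma ((n : ℝ) * α + 1)))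
        Filter.atTop (nhds (U * (∑' k : ℕ, V ^ k * w ^ k / Real.Gamma ((k : ℝ) * α + 1))
          + M * 0)) :=
      ((hsum.hasSum.tendsto_sum_nat).const_mul U).add
        (hsum.tendsto_atTop_zero.const_mul M)
    rw [mul_zero, add_zero] at hpartial
    have hfinal : y t ≤ U * ∑' k : ℕ, V ^ k * w ^ k / Real.Gamma ((k : ℝ) * α + 1) :=
      ge_of_tendsto hpartial (Filter.Eventually.of_forall
        (fun n => key n t (right_mem_Icc.2 ht')))
    have htsum_eq : (∑' k : ℕ, V ^ k * w ^ k / Real.Gamma ((k : ℝ) * α + 1))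
        = ∑' k : ℕ, V ^ k * (t - t₀) ^ ((k : ℝ) * α) / Real.Gamma ((k : ℝ) * α + 1) := by
      apply tsum_congr
      intro k
      rw [hwdef, hconv _ (by linarith) k]
    rw [htsum_eq] at hfinal
    exact hfinal
end

section
/- Let 0 < α < 1, t₀ ∈ ℝ, and let f : [t₀, ∞) × ℝ → ℝ be continuous and globally Lipschitz in its second variable with constant L ≥ 0. Then any two continuous solutions u, v on (t₀, T] of the integral equation u(t) = w (t-t₀)^{α-1}/Γ(α) + ∫_{t₀}^t ((t-τ)^{α-1}/Γ(α)) f(τ, u(τ)) dτ (same w and same f) that are integrable near t₀ coincide: u(t) = v(t) for all t ∈ (t₀, T]. -/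
open Set MeasureTheory ENNReal


set_option maxHeartbeats 1000000 in
lemma meas_rpow_aux (r : ℝ) : Measurable fun x : ℝ => x ^ r := by measurability

lemma kernel_meas {r t : ℝ} : Measurable (fun τ : ℝ => (t - τ) ^ r) :=
  (meas_rpow_aux r).comp (measurable_const.sub measurable_id)

lemma kernel_integrableOn {α : ℝ} (hα0 : 0 < α) (a t : ℝ) :
    IntegrableOn (fun τ : ℝ => (t - τ) ^ (α - 1)) (Ioc a t) := by
  have h : IntervalIntegrable (fun x : ℝ => x ^ (α - 1)) volume 0 (t - a) :=
    intervalIntegral.intervalIntegrable_rpow' (by linarith)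
  have h2 := (h.comp_sub_left t).symm
  simp only [sub_zero, _root_.sub_sub_cancel] at h2
  rcases le_or_gt a t with hat | hat
  · rw [intervalIntegrable_iff_integrableOn_Ioc_of_le hat] at h2
    exact h2
  · simp [Set.Ioc_eq_empty (not_lt.mpr hat.le)]

lemma aux_integrable {α t₀ T : ℝ} (hα0 : 0 < α) (hα1 : α < 1) (h : ℝ → ℝ)
    (hc : ContinuousOn h (Ioc t₀ T)) (hi : IntegrableOn h (Ioc t₀ T))
    {t : ℝ} (ht : t ∈ Ioc t₀ T) :
    IntegrableOn (fun τ => (t - τ) ^ (α - 1) * h τ) (Ioc t₀ t) := by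
  obtain ⟨ht0, htT⟩ := ht
  set m := (t₀ + t) / 2 with hm
  have hm1 : t₀ < m := by simp only [hm]; linarith
  have hm2 : m < t := by simp only [hm]; linarith
  have hsub1 : Ioc t₀ m ⊆ Ioc t₀ T := Ioc_subset_Ioc le_rfl (by linarith)
  have hsub2 : Ioc m t ⊆ Ioc t₀ T := Ioc_subset_Ioc hm1.le htT
  have hunion : Ioc t₀ m ∪ Ioc m t = Ioc t₀ t := Ioc_union_Ioc_eq_Ioc hm1.le hm2.le
  rw [← hunion]
  apply IntegrableOn.union
  · have hint : IntegrableOn (fun τ => (t - m) ^ (α - 1) * |h τ|) (Ioc t₀ m) :=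
      ((hi.mono_set hsub1).abs.const_mul _)
    apply hint.mono'
    · exact kernel_meas.aestronglyMeasurable.mul
        ((hc.mono hsub1).aestronglyMeasurable measurableSet_Ioc)
    · filter_upwards [ae_restrict_mem measurableSet_Ioc] with τ hτ
      have h1 : (0:ℝ) ≤ t - τ := by linarith [hτ.2]
      rw [norm_mul, Real.norm_rpow_of_nonneg h1, Real.norm_of_nonneg h1]
      exact mul_le_mul_of_nonneg_right
        (Real.rpow_le_rpow_of_nonpos (by linarith) (by linarith [hτ.2]) (by linarith))
        (norm_nonneg _)
  · obtain ⟨C, hC⟩ := (isCompact_Icc (a := m) (b := t)).exists_bound_of_continuousOn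
      (hc.mono (fun x hx => ⟨lt_of_lt_of_le hm1 hx.1, le_trans hx.2 htT⟩))
    have hint : IntegrableOn (fun τ => (t - τ) ^ (α - 1) * C) (Ioc m t) :=
      (kernel_integrableOn hα0 m t).mul_const _
    apply hint.mono'
    · exact kernel_meas.aestronglyMeasurable.mul
        ((hc.mono hsub2).aestronglyMeasurable measurableSet_Ioc)
    · filter_upwards [ae_restrict_mem measurableSet_Ioc] with τ hτ
      have h1 : (0:ℝ) ≤ t - τ := by linarith [hτ.2]
      rw [norm_mul, Real.norm_rpow_of_nonneg h1, Real.norm_of_nonneg h1]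
      exact mul_le_mul_of_nonneg_left (hC τ ⟨hτ.1.le, hτ.2⟩) (Real.rpow_nonneg h1 _)

lemma fu_cont {t₀ T : ℝ} {f : ℝ → ℝ → ℝ} {u : ℝ → ℝ}
    (hf : ContinuousOn (fun p : ℝ × ℝ => f p.1 p.2) (Ici t₀ ×ˢ univ))
    (hu : ContinuousOn u (Ioc t₀ T)) :
    ContinuousOn (fun τ => f τ (u τ)) (Ioc t₀ T) := by
  apply hf.comp (continuousOn_id.prodMk hu)
  intro x hx
  exact ⟨hx.1.le, mem_univ _⟩

lemma fu_int {t₀ T L : ℝ} {f : ℝ → ℝ → ℝ} {u : ℝ → ℝ} (hT : t₀ < T) (hL : 0 ≤ L)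
    (hf : ContinuousOn (fun p : ℝ × ℝ => f p.1 p.2) (Ici t₀ ×ˢ univ))
    (hlip : ∀ x₁ ∈ Ici t₀, ∀ x₂ x₂' : ℝ, |f x₁ x₂ - f x₁ x₂'| ≤ L * |x₂ - x₂'|)
    (hu : ContinuousOn u (Ioc t₀ T)) (huint : IntegrableOn u (Ioc t₀ T)) :
    IntegrableOn (fun τ => f τ (u τ)) (Ioc t₀ T) := by
  have hc0 : ContinuousOn (fun τ => f τ 0) (Icc t₀ T) := by
    apply hf.comp (continuousOn_id.prodMk continuousOn_const)
    intro x hx; exact ⟨hx.1, mem_univ _⟩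
  obtain ⟨C, hC⟩ := isCompact_Icc.exists_bound_of_continuousOn hc0
  have hint : IntegrableOn (fun τ => C + L * |u τ|) (Ioc t₀ T) :=
    (integrableOn_const measure_Ioc_lt_top.ne).add (huint.abs.const_mul _)
  apply hint.mono'
  · exact (fu_cont hf hu).aestronglyMeasurable measurableSet_Ioc
  · filter_upwards [ae_restrict_mem measurableSet_Ioc] with τ hτ
    have h1 := hlip τ (le_of_lt hτ.1) (u τ) 0
    have h2 := hC τ ⟨hτ.1.le, hτ.2⟩
    calc ‖f τ (u τ)‖ = |f τ (u τ) - f τ 0 + f τ 0| := by rw [Real.norm_eq_abs]; ring_nf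
      _ ≤ |f τ (u τ) - f τ 0| + |f τ 0| := abs_add_le _ _
      _ ≤ L * |u τ - 0| + C := add_le_add h1 h2
      _ = C + L * |u τ| := by rw [sub_zero]; ring

lemma key_ineq (α L w t₀ T : ℝ) (f : ℝ → ℝ → ℝ) (u v : ℝ → ℝ)
    (hα0 : 0 < α) (hα1 : α < 1) (hL : 0 ≤ L) (hT : t₀ < T)
    (hf : ContinuousOn (fun p : ℝ × ℝ => f p.1 p.2) (Ici t₀ ×ˢ univ))
    (hlip : ∀ x₁ ∈ Ici t₀, ∀ x₂ x₂' : ℝ, |f x₁ x₂ - f x₁ x₂'| ≤ L * |x₂ - x₂'|)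
    (hu : ContinuousOn u (Ioc t₀ T)) (hv : ContinuousOn v (Ioc t₀ T))
    (huint : IntegrableOn u (Ioc t₀ T)) (hvint : IntegrableOn v (Ioc t₀ T))
    (hueq : ∀ t ∈ Ioc t₀ T, u t = w * (t - t₀) ^ (α - 1) / Real.Gamma α +
      ∫ τ in t₀..t, (t - τ) ^ (α - 1) / Real.Gamma α * f τ (u τ))
    (hveq : ∀ t ∈ Ioc t₀ T, v t = w * (t - t₀) ^ (α - 1) / Real.Gamma α +
      ∫ τ in t₀..t, (t - τ) ^ (α - 1) / Real.Gamma α * f τ (v τ)) :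
    ∀ t ∈ Ioc t₀ T, |u t - v t| ≤
      L / Real.Gamma α * ∫ τ in Ioc t₀ t, (t - τ) ^ (α - 1) * |u τ - v τ| := by
  intro t ht
  have hΓ : 0 < Real.Gamma α := Real.Gamma_pos_of_pos hα0
  have hiu : IntegrableOn (fun τ => (t - τ) ^ (α - 1) / Real.Gamma α * f τ (u τ)) (Ioc t₀ t) := by
    have := (aux_integrable hα0 hα1 _ (fu_cont hf hu) (fu_int hT hL hf hlip hu huint) ht).div_const
      (Real.Gamma α)
    simpa [div_mul_eq_mul_div, mul_div_assoc, IntegrableOn] using this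
  have hiv : IntegrableOn (fun τ => (t - τ) ^ (α - 1) / Real.Gamma α * f τ (v τ)) (Ioc t₀ t) := by
    have := (aux_integrable hα0 hα1 _ (fu_cont hf hv) (fu_int hT hL hf hlip hv hvint) ht).div_const
      (Real.Gamma α)
    simpa [div_mul_eq_mul_div, mul_div_assoc, IntegrableOn] using this
  have hg_int : IntegrableOn (fun τ => (t - τ) ^ (α - 1) * |u τ - v τ|) (Ioc t₀ t) :=
    aux_integrable hα0 hα1 _ ((hu.sub hv).abs) ((huint.sub hvint).abs) ht
  have heq : u t - v t = ∫ τ in Ioc t₀ t,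
      (t - τ) ^ (α - 1) / Real.Gamma α * (f τ (u τ) - f τ (v τ)) := by
    rw [hueq t ht, hveq t ht]
    rw [add_sub_add_left_eq_sub, ← intervalIntegral.integral_sub
      ((intervalIntegrable_iff_integrableOn_Ioc_of_le ht.1.le).2 hiu)
      ((intervalIntegrable_iff_integrableOn_Ioc_of_le ht.1.le).2 hiv),
      intervalIntegral.integral_of_le ht.1.le]
    congr 1; ext τ; ring
  rw [heq]
  calc ‖∫ τ in Ioc t₀ t, (t - τ) ^ (α - 1) / Real.Gamma α * (f τ (u τ) - f τ (v τ))‖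
      ≤ ∫ τ in Ioc t₀ t, ‖(t - τ) ^ (α - 1) / Real.Gamma α * (f τ (u τ) - f τ (v τ))‖ :=
        norm_integral_le_integral_norm _
    _ ≤ ∫ τ in Ioc t₀ t, L / Real.Gamma α * ((t - τ) ^ (α - 1) * |u τ - v τ|) := by
        have hnormint : IntegrableOn
            (fun τ => ‖(t - τ) ^ (α - 1) / Real.Gamma α * (f τ (u τ) - f τ (v τ))‖) (Ioc t₀ t) :=
          (hiu.sub hiv).norm.congr (Filter.Eventually.of_forall
            (fun τ => congrArg norm (by simp only [Pi.sub_apply]; ring)))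
        refine setIntegral_mono_on hnormint (hg_int.const_mul _) measurableSet_Ioc ?_
        · intro τ hτ
          have hk : (0:ℝ) ≤ (t - τ) ^ (α - 1) := Real.rpow_nonneg (by linarith [hτ.2]) _
          have hlip' := hlip τ (le_of_lt (lt_of_lt_of_le hτ.1 le_rfl)) (u τ) (v τ)
          rw [norm_mul, Real.norm_of_nonneg (div_nonneg hk hΓ.le)]
          calc (t - τ) ^ (α - 1) / Real.Gamma α * ‖f τ (u τ) - f τ (v τ)‖
              ≤ (t - τ) ^ (α - 1) / Real.Gamma α * (L * |u τ - v τ|) := by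
                exact mul_le_mul_of_nonneg_left hlip' (div_nonneg hk hΓ.le)
            _ = L / Real.Gamma α * ((t - τ) ^ (α - 1) * |u τ - v τ|) := by ring
    _ = L / Real.Gamma α * ∫ τ in Ioc t₀ t, (t - τ) ^ (α - 1) * |u τ - v τ| := by
        rw [integral_const_mul]

lemma kernel_integrableOn' {α : ℝ} (hα0 : 0 < α) (σ t : ℝ) :
    IntegrableOn (fun τ : ℝ => (τ - σ) ^ (α - 1)) (Ioc σ t) := by
  have h : IntervalIntegrable (fun x : ℝ => x ^ (α - 1)) volume 0 (t - σ) :=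
    intervalIntegral.intervalIntegrable_rpow' (by linarith)
  have h2 := h.comp_sub_right σ
  simp only [zero_add, sub_add_cancel] at h2
  rcases le_or_gt σ t with hσt | hσt
  · rw [intervalIntegrable_iff_integrableOn_Ioc_of_le hσt] at h2
    exact h2
  · simp [Set.Ioc_eq_empty (not_lt.mpr hσt.le)]

lemma kernel_integral_eq {α : ℝ} (hα0 : 0 < α) {σ t : ℝ} (hσt : σ ≤ t) :
    ∫ τ in Ioc σ t, (τ - σ) ^ (α - 1) = (t - σ) ^ α / α := by
  rw [← intervalIntegral.integral_of_le hσt]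
  rw [intervalIntegral.integral_comp_sub_right (fun x => x ^ (α - 1)) σ]
  rw [integral_rpow (Or.inl (by linarith))]
  have h1 : α - 1 + 1 = α := by ring
  rw [h1, sub_self, Real.zero_rpow hα0.ne', sub_zero]

lemma gronwall_step (hα0 : 0 < α) (hα1 : α < 1) (hL : 0 ≤ L) {g : ℝ → ℝ}
    (hgc : ContinuousOn g (Ioc t₀ T)) (hgi : IntegrableOn g (Ioc t₀ T))
    (hgnn : ∀ τ, 0 ≤ g τ)
    (hkey : ∀ t ∈ Ioc t₀ T, g t ≤ L / Real.Gamma α * ∫ τ in Ioc t₀ t, (t - τ) ^ (α - 1) * g τ)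
    {s t : ℝ} (hs : t₀ ≤ s) (hst : s < t) (htT : t ≤ T)
    (hzero : ∀ᵐ τ ∂(volume.restrict (Ioc t₀ s)), g τ = 0)
    (hsmall : L / Real.Gamma α * ((t - s) ^ α / α) < 1) :
    ∀ᵐ τ ∂(volume.restrict (Ioc t₀ t)), g τ = 0 := by
  have hΓ : 0 < Real.Gamma α := Real.Gamma_pos_of_pos hα0
  set c := L / Real.Gamma α with hc
  have hc0 : 0 ≤ c := div_nonneg hL hΓ.le
  have hgm : AEStronglyMeasurable g (volume.restrict (Ioc t₀ T)) := hgi.1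
  set g' : ℝ → ℝ := hgm.mk g with hg'def
  have hg'meas : StronglyMeasurable g' := hgm.stronglyMeasurable_mk
  have hgg' : g =ᵐ[volume.restrict (Ioc t₀ T)] g' := hgm.ae_eq_mk
  have hsubeq : ∀ {A : Set ℝ}, A ⊆ Ioc t₀ T → g =ᵐ[volume.restrict A] g' :=
    fun h => ae_restrict_of_ae_restrict_of_subset h hgg'
  have hgi' : IntegrableOn g' (Ioc t₀ T) := hgi.congr hgg'
  have hS : Ioc s t ⊆ Ioc t₀ T := Ioc_subset_Ioc hs htT
  have hzero' : ∀ᵐ τ ∂(volume.restrict (Ioc t₀ s)), g' τ = 0 := by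
    filter_upwards [hzero, hsubeq (Ioc_subset_Ioc le_rfl (hst.le.trans htT))] with τ h1 h2
    rw [← h2]; exact h1
  -- pointwise inequality with g'
  have hstep : ∀ τ ∈ Ioc s t, g τ ≤ c * ∫ σ in Ioc s τ, (τ - σ) ^ (α - 1) * g' σ := by
    intro τ hτ
    have hτT : τ ∈ Ioc t₀ T := hS hτ
    have h1 := hkey τ hτT
    have hint : IntegrableOn (fun σ => (τ - σ) ^ (α - 1) * g σ) (Ioc t₀ τ) :=
      aux_integrable hα0 hα1 g hgc hgi hτT
    have heqf : (fun σ => (τ - σ) ^ (α - 1) * g σ)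
        =ᵐ[volume.restrict (Ioc t₀ τ)] (fun σ => (τ - σ) ^ (α - 1) * g' σ) := by
      filter_upwards [hsubeq (Ioc_subset_Ioc le_rfl hτT.2)] with σ h2
      rw [h2]
    have hint' : IntegrableOn (fun σ => (τ - σ) ^ (α - 1) * g' σ) (Ioc t₀ τ) :=
      hint.congr heqf
    have he1 : ∫ σ in Ioc t₀ τ, (τ - σ) ^ (α - 1) * g σ
        = ∫ σ in Ioc t₀ τ, (τ - σ) ^ (α - 1) * g' σ := integral_congr_ae heqf
    have hsplit : ∫ σ in Ioc t₀ τ, (τ - σ) ^ (α - 1) * g' σ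
        = (∫ σ in Ioc t₀ s, (τ - σ) ^ (α - 1) * g' σ)
          + ∫ σ in Ioc s τ, (τ - σ) ^ (α - 1) * g' σ := by
      rw [← Ioc_union_Ioc_eq_Ioc hs hτ.1.le]
      exact setIntegral_union (Set.Ioc_disjoint_Ioc_of_le le_rfl) measurableSet_Ioc
        (hint'.mono_set (Ioc_subset_Ioc le_rfl hτ.1.le))
        (hint'.mono_set (Ioc_subset_Ioc hs le_rfl))
    have hz : ∫ σ in Ioc t₀ s, (τ - σ) ^ (α - 1) * g' σ = 0 := by
      apply integral_eq_zero_of_ae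
      filter_upwards [hzero'] with σ h2
      simp [h2]
    rw [he1, hsplit, hz, zero_add] at h1
    exact h1
  -- move to ENNReal
  set S := Ioc s t with hSdef
  set J : ℝ≥0∞ := ∫⁻ σ in S, ENNReal.ofReal (g' σ) with hJ
  have hg'nn : ∀ᵐ σ ∂(volume.restrict (Ioc t₀ T)), 0 ≤ g' σ := by
    filter_upwards [hgg'] with σ h2
    rw [← h2]; exact hgnn σ
  have hJne : J ≠ ∞ := by
    refine (lt_of_le_of_lt (lintegral_ofReal_le_lintegral_enorm _) ?_).ne
    exact (hgi'.mono_set hS).2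
  -- per-τ chain into lintegral form
  have hΦ : ∀ τ ∈ S, ENNReal.ofReal (g τ) ≤ ENNReal.ofReal c *
      ∫⁻ σ in Ioc s τ, ENNReal.ofReal ((τ - σ) ^ (α - 1)) * ENNReal.ofReal (g' σ) := by
    intro τ hτ
    have hτT : τ ∈ Ioc t₀ T := hS hτ
    have hint0 : IntegrableOn (fun σ => (τ - σ) ^ (α - 1) * g' σ) (Ioc t₀ τ) :=
      (aux_integrable hα0 hα1 g hgc hgi hτT).congr
        (by filter_upwards [hsubeq (Ioc_subset_Ioc le_rfl hτT.2)] with σ h2; rw [h2])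
    have hint' : IntegrableOn (fun σ => (τ - σ) ^ (α - 1) * g' σ) (Ioc s τ) :=
      hint0.mono_set (Ioc_subset_Ioc hs le_rfl)
    have hnn : 0 ≤ᵐ[volume.restrict (Ioc s τ)] fun σ => (τ - σ) ^ (α - 1) * g' σ := by
      filter_upwards [ae_restrict_mem measurableSet_Ioc,
        ae_restrict_of_ae_restrict_of_subset (Ioc_subset_Ioc hs hτT.2) hg'nn] with σ hσ h2
      exact mul_nonneg (Real.rpow_nonneg (by linarith [hσ.2]) _) h2
    calc ENNReal.ofReal (g τ)
        ≤ ENNReal.ofReal (c * ∫ σ in Ioc s τ, (τ - σ) ^ (α - 1) * g' σ) :=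
          ENNReal.ofReal_le_ofReal (hstep τ hτ)
      _ = ENNReal.ofReal c * ENNReal.ofReal (∫ σ in Ioc s τ, (τ - σ) ^ (α - 1) * g' σ) :=
          ENNReal.ofReal_mul hc0
      _ = ENNReal.ofReal c * ∫⁻ σ in Ioc s τ, ENNReal.ofReal ((τ - σ) ^ (α - 1) * g' σ) := by
          rw [ofReal_integral_eq_lintegral_ofReal hint' hnn]
      _ = ENNReal.ofReal c *
          ∫⁻ σ in Ioc s τ, ENNReal.ofReal ((τ - σ) ^ (α - 1)) * ENNReal.ofReal (g' σ) := by
          congr 1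
          apply lintegral_congr_ae
          filter_upwards [ae_restrict_mem measurableSet_Ioc] with σ hσ
          exact ENNReal.ofReal_mul (Real.rpow_nonneg (by linarith [hσ.2]) _)
  -- Tonelli setup
  have hkermeas : Measurable (fun p : ℝ × ℝ => ENNReal.ofReal ((p.1 - p.2) ^ (α - 1))) :=
    ((meas_rpow_aux (α - 1)).comp (measurable_fst.sub measurable_snd)).ennreal_ofReal
  set F : ℝ → ℝ → ℝ≥0∞ := fun τ σ =>
    (Ioc s τ).indicator (fun σ => ENNReal.ofReal ((τ - σ) ^ (α - 1)) * ENNReal.ofReal (g' σ)) σ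
    with hF
  have hFmeas : AEMeasurable (Function.uncurry F)
      ((volume.restrict S).prod (volume.restrict S)) := by
    have heqF : Function.uncurry F = Set.indicator {p : ℝ × ℝ | s < p.2 ∧ p.2 ≤ p.1}
        (fun p => ENNReal.ofReal ((p.1 - p.2) ^ (α - 1)) * ENNReal.ofReal (g' p.2)) := by
      ext ⟨τ, σ⟩
      simp only [Function.uncurry, hF, Set.indicator_apply, Set.mem_Ioc, Set.mem_setOf_eq]
    rw [heqF]
    have hset : MeasurableSet {p : ℝ × ℝ | s < p.2 ∧ p.2 ≤ p.1} :=
      (measurableSet_lt measurable_const measurable_snd).inter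
        (measurableSet_le measurable_snd measurable_fst)
    exact ((hkermeas.mul
      ((hg'meas.measurable.comp measurable_snd).ennreal_ofReal)).indicator hset).aemeasurable
  have hswap := lintegral_lintegral_swap hFmeas
  have hΦF : ∀ τ ∈ S, (∫⁻ σ in Ioc s τ,
      ENNReal.ofReal ((τ - σ) ^ (α - 1)) * ENNReal.ofReal (g' σ)) = ∫⁻ σ in S, F τ σ := by
    intro τ hτ
    rw [hF]
    rw [lintegral_indicator measurableSet_Ioc, Measure.restrict_restrict measurableSet_Ioc,
      Set.inter_eq_self_of_subset_left (Ioc_subset_Ioc le_rfl hτ.2)]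
  have hJle : J ≤ ENNReal.ofReal c * ∫⁻ τ in S, ∫⁻ σ in S, F τ σ := by
    have h1 : J = ∫⁻ τ in S, ENNReal.ofReal (g τ) := by
      apply lintegral_congr_ae
      filter_upwards [hsubeq hS] with τ h2
      rw [h2]
    rw [h1, ← lintegral_const_mul' _ _ ENNReal.ofReal_ne_top]
    apply lintegral_mono_ae
    filter_upwards [ae_restrict_mem measurableSet_Ioc] with τ hτ
    calc ENNReal.ofReal (g τ)
        ≤ ENNReal.ofReal c * ∫⁻ σ in Ioc s τ,
            ENNReal.ofReal ((τ - σ) ^ (α - 1)) * ENNReal.ofReal (g' σ) := hΦ τ hτ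
      _ = ENNReal.ofReal c * ∫⁻ σ in S, F τ σ := by rw [hΦF τ hτ]
  have hinner : ∀ σ ∈ S, (∫⁻ τ in S, F τ σ)
      ≤ ENNReal.ofReal ((t - s) ^ α / α) * ENNReal.ofReal (g' σ) := by
    intro σ hσ
    have heq : ∀ τ, F τ σ =
        (Ici σ).indicator (fun τ' => ENNReal.ofReal ((τ' - σ) ^ (α - 1))) τ
          * ENNReal.ofReal (g' σ) := by
      intro τ
      by_cases hστ : σ ≤ τ
      · simp only [hF]
        rw [Set.indicator_of_mem (show σ ∈ Ioc s τ from ⟨hσ.1, hστ⟩),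
          Set.indicator_of_mem (show τ ∈ Ici σ from hστ)]
      · simp only [hF]
        rw [Set.indicator_of_notMem (show σ ∉ Ioc s τ from fun h => hστ h.2),
          Set.indicator_of_notMem (show τ ∉ Ici σ from hστ), zero_mul]
    have hkb : (∫⁻ τ' in Ioc σ t, ENNReal.ofReal ((τ' - σ) ^ (α - 1)))
        ≤ ENNReal.ofReal ((t - s) ^ α / α) := by
      have hnn : 0 ≤ᵐ[volume.restrict (Ioc σ t)] fun τ' => (τ' - σ) ^ (α - 1) := by
        filter_upwards [ae_restrict_mem measurableSet_Ioc] with τ' hτ'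
        exact Real.rpow_nonneg (by linarith [hτ'.1]) _
      rw [← ofReal_integral_eq_lintegral_ofReal (kernel_integrableOn' hα0 σ t) hnn,
        kernel_integral_eq hα0 hσ.2]
      apply ENNReal.ofReal_le_ofReal
      have h6 : (t - σ) ^ α ≤ (t - s) ^ α :=
        Real.rpow_le_rpow (by linarith [hσ.2]) (by linarith [hσ.1]) hα0.le
      exact (div_le_div_iff_of_pos_right hα0).2 h6
    calc (∫⁻ τ in S, F τ σ)
        = ∫⁻ τ in S, (Ici σ).indicator (fun τ' => ENNReal.ofReal ((τ' - σ) ^ (α - 1))) τ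
            * ENNReal.ofReal (g' σ) := lintegral_congr (fun τ => heq τ)
      _ = (∫⁻ τ in S, (Ici σ).indicator (fun τ' => ENNReal.ofReal ((τ' - σ) ^ (α - 1))) τ)
            * ENNReal.ofReal (g' σ) := lintegral_mul_const' _ _ ENNReal.ofReal_ne_top
      _ = (∫⁻ τ' in Ioc σ t, ENNReal.ofReal ((τ' - σ) ^ (α - 1))) * ENNReal.ofReal (g' σ) := by
          rw [lintegral_indicator measurableSet_Ici, Measure.restrict_restrict measurableSet_Ici]
          congr 1
          have hset2 : Ici σ ∩ S = Icc σ t := by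
            ext x
            simp only [Set.mem_inter_iff, Set.mem_Ici, hSdef, Set.mem_Ioc, Set.mem_Icc]
            constructor
            · rintro ⟨h1, _, h3⟩; exact ⟨h1, h3⟩
            · rintro ⟨h1, h2⟩; exact ⟨h1, lt_of_lt_of_le hσ.1 h1, h2⟩
          rw [hset2]
          exact (setLIntegral_congr Ioc_ae_eq_Icc).symm
      _ ≤ ENNReal.ofReal ((t - s) ^ α / α) * ENNReal.ofReal (g' σ) :=
          mul_le_mul_left hkb _
  have hfinal : J ≤ ENNReal.ofReal (c * ((t - s) ^ α / α)) * J := by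
    calc J ≤ ENNReal.ofReal c * ∫⁻ τ in S, ∫⁻ σ in S, F τ σ := hJle
      _ = ENNReal.ofReal c * ∫⁻ σ in S, ∫⁻ τ in S, F τ σ := by rw [hswap]
      _ ≤ ENNReal.ofReal c * ∫⁻ σ in S,
            ENNReal.ofReal ((t - s) ^ α / α) * ENNReal.ofReal (g' σ) := by
          apply mul_le_mul_right
          apply lintegral_mono_ae
          filter_upwards [ae_restrict_mem measurableSet_Ioc] with σ hσ
          exact hinner σ hσ
      _ = ENNReal.ofReal c * (ENNReal.ofReal ((t - s) ^ α / α) * J) := by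
          rw [lintegral_const_mul' _ _ ENNReal.ofReal_ne_top]
      _ = ENNReal.ofReal (c * ((t - s) ^ α / α)) * J := by
          rw [ENNReal.ofReal_mul hc0, mul_assoc]
  have hJ0 : J = 0 := by
    by_contra hne
    have h2 : ENNReal.ofReal (c * ((t - s) ^ α / α)) * J < 1 * J :=
      by rw [mul_comm _ J, mul_comm 1 J]; exact ENNReal.mul_lt_mul_right hne hJne (ENNReal.ofReal_lt_one.2 hsmall)
    rw [one_mul] at h2
    exact lt_irrefl J (lt_of_le_of_lt hfinal h2)
  have hSzero : ∀ᵐ τ ∂(volume.restrict S), g τ = 0 := by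
    have hmeas2 : AEMeasurable (fun σ => ENNReal.ofReal (g' σ)) (volume.restrict S) :=
      (hg'meas.measurable.ennreal_ofReal).aemeasurable
    have h3 := (lintegral_eq_zero_iff' hmeas2).1 hJ0
    filter_upwards [h3, hsubeq hS] with σ h1 h2
    have h4 : g' σ ≤ 0 := by
      have : ENNReal.ofReal (g' σ) = 0 := h1
      simpa [ENNReal.ofReal_eq_zero] using this
    have h5 := hgnn σ
    rw [h2]
    linarith [h2 ▸ h4]
  rw [← Ioc_union_Ioc_eq_Ioc hs hst.le,
    Measure.restrict_union (Set.Ioc_disjoint_Ioc_of_le le_rfl) measurableSet_Ioc, ae_add_measure_iff]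
  exact ⟨hzero, hSzero⟩

lemma gronwall_all {α t₀ T L : ℝ} (hα0 : 0 < α) (hα1 : α < 1) (hL : 0 ≤ L) (hT : t₀ < T)
    {g : ℝ → ℝ}
    (hgc : ContinuousOn g (Ioc t₀ T)) (hgi : IntegrableOn g (Ioc t₀ T))
    (hgnn : ∀ τ, 0 ≤ g τ)
    (hkey : ∀ t ∈ Ioc t₀ T, g t ≤ L / Real.Gamma α * ∫ τ in Ioc t₀ t, (t - τ) ^ (α - 1) * g τ) :
    ∀ᵐ τ ∂(volume.restrict (Ioc t₀ T)), g τ = 0 := by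
  have hΓ : 0 < Real.Gamma α := Real.Gamma_pos_of_pos hα0
  set c0 := L / Real.Gamma α / α with hc0def
  have hc0nn : 0 ≤ c0 := div_nonneg (div_nonneg hL hΓ.le) hα0.le
  set δ := (1 / (c0 + 1)) ^ (1 / α) with hδdef
  have hδ0 : 0 < δ := Real.rpow_pos_of_pos (by positivity) _
  have hδα : δ ^ α = 1 / (c0 + 1) := by
    rw [hδdef, ← Real.rpow_mul (by positivity), one_div α, inv_mul_cancel₀ hα0.ne',
      Real.rpow_one]
  have hsmallδ : L / Real.Gamma α * (δ ^ α / α) < 1 := by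
    rw [hδα]
    have heq : L / Real.Gamma α * (1 / (c0 + 1) / α) = c0 / (c0 + 1) := by
      rw [hc0def]; ring
    rw [heq]
    exact (div_lt_one (by linarith)).2 (by linarith)
  have hkeystep : ∀ n : ℕ, ∀ᵐ τ ∂(volume.restrict (Ioc t₀ (min (t₀ + n * δ) T))), g τ = 0 := by
    intro n
    induction n with
    | zero =>
      simp only [Nat.cast_zero, zero_mul, add_zero, min_eq_left hT.le, Ioc_self,
        Measure.restrict_empty]
      simp
    | succ n ih =>
      rcases le_or_gt T (t₀ + n * δ) with hc1 | hc1
      · have h1 : min (t₀ + n * δ) T = T := min_eq_right hc1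
        have h2 : min (t₀ + (n + 1 : ℕ) * δ) T = T := by
          apply min_eq_right
          push_cast
          nlinarith [hδ0]
        rw [h2, ← h1]
        exact ih
      · have h1 : min (t₀ + n * δ) T = t₀ + n * δ := min_eq_left hc1.le
        set s := t₀ + n * δ with hsdef
        set t' := min (t₀ + (n + 1 : ℕ) * δ) T with ht'def
        have hcast : (t₀ + (n + 1 : ℕ) * δ) = s + δ := by push_cast; ring
        have hst : s < t' := by
          rw [ht'def, hcast]
          exact lt_min (by linarith) hc1
        have htT : t' ≤ T := min_le_right _ _
        have hts : t' - s ≤ δ := by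
          have h3 : t' ≤ s + δ := hcast ▸ min_le_left _ _
          linarith
        have hs0 : t₀ ≤ s := by
          have : (0:ℝ) ≤ n * δ := by positivity
          linarith
        have hsmall : L / Real.Gamma α * ((t' - s) ^ α / α) < 1 := by
          refine lt_of_le_of_lt ?_ hsmallδ
          have h4 : (t' - s) ^ α ≤ δ ^ α :=
            Real.rpow_le_rpow (by linarith) hts hα0.le
          have h5 : (t' - s) ^ α / α ≤ δ ^ α / α :=
            (div_le_div_iff_of_pos_right hα0).2 h4
          exact mul_le_mul_of_nonneg_left h5 (div_nonneg hL hΓ.le)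
        rw [h1] at ih
        exact gronwall_step hα0 hα1 hL hgc hgi hgnn hkey hs0 hst htT ih hsmall
  obtain ⟨n, hn⟩ := exists_nat_ge ((T - t₀) / δ)
  have hend : min (t₀ + n * δ) T = T := by
    apply min_eq_right
    rw [div_le_iff₀ hδ0] at hn
    linarith
  have := hkeystep n
  rwa [hend] at this

theorem stmt_13 (α L w t₀ T : ℝ) (f : ℝ → ℝ → ℝ) (u v : ℝ → ℝ)
    (hα0 : 0 < α) (hα1 : α < 1) (hL : 0 ≤ L) (hT : t₀ < T)
    (hf : ContinuousOn (fun p : ℝ × ℝ => f p.1 p.2) (Ici t₀ ×ˢ univ))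
    (hlip : ∀ x₁ ∈ Ici t₀, ∀ x₂ x₂' : ℝ, |f x₁ x₂ - f x₁ x₂'| ≤ L * |x₂ - x₂'|)
    (hu : ContinuousOn u (Ioc t₀ T)) (hv : ContinuousOn v (Ioc t₀ T))
    (huint : IntegrableOn u (Ioc t₀ T)) (hvint : IntegrableOn v (Ioc t₀ T))
    (hueq : ∀ t ∈ Ioc t₀ T, u t = w * (t - t₀) ^ (α - 1) / Real.Gamma α +
      ∫ τ in t₀..t, (t - τ) ^ (α - 1) / Real.Gamma α * f τ (u τ))
    (hveq : ∀ t ∈ Ioc t₀ T, v t = w * (t - t₀) ^ (α - 1) / Real.Gamma α +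
      ∫ τ in t₀..t, (t - τ) ^ (α - 1) / Real.Gamma α * f τ (v τ)) :
    ∀ t ∈ Ioc t₀ T, u t = v t := by
  set g : ℝ → ℝ := fun τ => |u τ - v τ| with hg
  have hgc : ContinuousOn g (Ioc t₀ T) := (hu.sub hv).abs
  have hgi : IntegrableOn g (Ioc t₀ T) := (huint.sub hvint).abs
  have hgnn : ∀ τ, 0 ≤ g τ := fun τ => abs_nonneg _
  have hkey := key_ineq α L w t₀ T f u v hα0 hα1 hL hT hf hlip hu hv huint hvint hueq hveq
  have hzero := gronwall_all hα0 hα1 hL hT hgc hgi hgnn hkey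
  intro t ht
  have h1 := hkey t ht
  have h2 : ∫ τ in Ioc t₀ t, (t - τ) ^ (α - 1) * g τ = 0 := by
    apply integral_eq_zero_of_ae
    filter_upwards [ae_restrict_of_ae_restrict_of_subset (Ioc_subset_Ioc le_rfl ht.2) hzero]
      with τ hτ
    simp [hτ]
  rw [h2, mul_zero] at h1
  have h3 : g t = 0 := le_antisymm h1 (hgnn t)
  have h4 : |u t - v t| = 0 := h3
  rw [abs_eq_zero, sub_eq_zero] at h4
  exact h4
end
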